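/- Let p₁, …, p_k be distinct prime numbers and F := ℚ(√p₁, …, √p_k) ⊆ ℝ. Then for every choice of signs s : {1, …, k} → {+1, −1} there exists exactly one field automorphism τ_s of F fixing ℚ with τ_s(√p_i) = s(i)√p_i for all i, every automorphism of F fixing ℚ is of this form, and consequently the Galois group of F over ℚ is an abelian group of order 2^k, generated by the automorphisms τ_i determined by τ_i(√p_j) = (−1)^{δ(i,j)} √p_j. -/

import Mathlib

/-!
If `√a`, `√b` and `√(ab)` all lie outside a field `K` of characteristic `≠ 2`, then `√b` is not
in `K(√a)`: writing `√b = u + v√a` and squaring forces `uv = 0`. By induction on the number of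
primes this shows that `√m ∉ ℚ(√p₁, …, √p_k)` for every squarefree `m ≠ 1` coprime to the `pᵢ`,
so each new square root doubles the degree and `[F : ℚ] = 2^k`. Being a compositum of quadratic
extensions, `F` is Galois over `ℚ` and has `2^k` automorphisms. Each one sends `√pᵢ` to `±√pᵢ`
and is determined by these signs, so recording the signs is an injective homomorphism into
`(ℤˣ)^k`, which is an isomorphism by counting.
-/

/-- The field `ℚ(√p₁, …, √p_k)` generated over `ℚ` by the square roots of `k`
distinct primes, as an intermediate field of `ℝ/ℚ`. -/
noncomputable def sqrtAdjoin (k : ℕ) (p : Fin k → ℕ) : IntermediateField ℚ ℝ :=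
  IntermediateField.adjoin ℚ (Set.range fun i : Fin k => Real.sqrt (p i))

open IntermediateField Polynomial
open scoped Real

section AdjoinSqrt

variable {K L : Type*} [Field K] [Field L] [Algebra K L] {x : L} {a : K}

theorem isIntegral_of_sq_eq_algebraMap (hx : x ^ 2 = algebraMap K L a) : IsIntegral K x :=
  ⟨X ^ 2 - C a, monic_X_pow_sub_C a two_ne_zero, by simp [hx]⟩

theorem exists_eq_add_mul_of_mem_adjoin_sqrt (hx : x ^ 2 = algebraMap K L a) {y : L}
    (hy : y ∈ K⟮x⟯) : ∃ u v : K, y = algebraMap K L u + algebraMap K L v * x := by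
  rw [← mem_toSubalgebra, adjoin_simple_toSubalgebra_of_isAlgebraic
    (isIntegral_of_sq_eq_algebraMap hx).isAlgebraic, Algebra.adjoin_singleton_eq_range_aeval] at hy
  obtain ⟨f, rfl⟩ := hy
  have hmonic : (X ^ 2 - C a).Monic := monic_X_pow_sub_C a two_ne_zero
  have hdeg : (f %ₘ (X ^ 2 - C a)).natDegree ≤ 1 := by
    have := natDegree_modByMonic_lt f hmonic (fun h => by simpa using congrArg natDegree h)
    rw [natDegree_X_pow_sub_C] at this
    omega
  refine ⟨(f %ₘ (X ^ 2 - C a)).coeff 0, (f %ₘ (X ^ 2 - C a)).coeff 1, ?_⟩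
  rw [AlgHom.toRingHom_eq_coe, RingHom.coe_coe,
    ← aeval_modByMonic_eq_self_of_root (q := X ^ 2 - C a) (by simp [hx]),
    eq_X_add_C_of_natDegree_le_one hdeg]
  simp [add_comm]

theorem finrank_adjoin_sqrt (hx : x ^ 2 = algebraMap K L a)
    (hxK : x ∉ Set.range (algebraMap K L)) : Module.finrank K K⟮x⟯ = 2 := by
  have hirr : Irreducible (X ^ 2 - C a) := by
    refine X_pow_sub_C_irreducible_of_prime Nat.prime_two fun b hb => hxK ?_
    have : x ^ 2 = algebraMap K L b ^ 2 := by rw [hx, ← hb, map_pow]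
    rcases sq_eq_sq_iff_eq_or_eq_neg.mp this with h | h
    · exact ⟨b, h.symm⟩
    · exact ⟨-b, by rw [map_neg, h]⟩
  rw [adjoin.finrank (isIntegral_of_sq_eq_algebraMap hx),
    ← minpoly.eq_of_irreducible_of_monic hirr (by simp [hx]) (monic_X_pow_sub_C a two_ne_zero),
    natDegree_X_pow_sub_C]

theorem notMem_adjoin_sqrt [NeZero (2 : K)] (hx : x ^ 2 = algebraMap K L a) {y : L} {b : K}
    (hy : y ^ 2 = algebraMap K L b) (hxK : x ∉ Set.range (algebraMap K L))
    (hyK : y ∉ Set.range (algebraMap K L)) (hxyK : x * y ∉ Set.range (algebraMap K L)) :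
    y ∉ K⟮x⟯ := by
  intro hyx
  obtain ⟨u, v, rfl⟩ := exists_eq_add_mul_of_mem_adjoin_sqrt hx hyx
  by_cases hv : v = 0
  · exact hyK ⟨u, by simp [hv]⟩
  by_cases hu : u = 0
  · exact hxyK ⟨v * a, by simp [hu, ← hx]; ring⟩
  refine hxK ⟨(b - u ^ 2 - v ^ 2 * a) / (2 * u * v), ?_⟩
  have h2uv : algebraMap K L (2 * u * v) ≠ 0 := by simp [hu, hv, NeZero.ne]
  rw [map_div₀, div_eq_iff h2uv]
  simp only [map_sub, map_mul, map_pow, ← hx, ← hy, map_ofNat]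
  ring

theorem normal_adjoin_sqrt (hx : x ^ 2 = algebraMap K L a) : Normal K K⟮x⟯ := by
  by_cases hxK : x ∈ Set.range (algebraMap K L)
  · rw [adjoin_simple_eq_bot_iff.mpr (mem_bot.mpr hxK)]
    infer_instance
  · have : Algebra.IsQuadraticExtension K K⟮x⟯ := ⟨finrank_adjoin_sqrt hx hxK⟩
    infer_instance

theorem AlgEquiv.apply_eq_or_eq_neg_of_sq_eq_algebraMap (hx : x ^ 2 = algebraMap K L a)
    (τ : L ≃ₐ[K] L) : τ x = x ∨ τ x = -x :=
  sq_eq_sq_iff_eq_or_eq_neg.mp (by rw [← map_pow, hx, τ.commutes])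

open Classical in
noncomputable def sqrtSign (hx : x ^ 2 = algebraMap K L a) (hx0 : x ≠ -x) :
    (L ≃ₐ[K] L) →* ℤˣ where
  toFun τ := if τ x = x then 1 else -1
  map_one' := by simp
  map_mul' σ τ := by
    rcases σ.apply_eq_or_eq_neg_of_sq_eq_algebraMap hx with hσ | hσ <;>
    rcases τ.apply_eq_or_eq_neg_of_sq_eq_algebraMap hx with hτ | hτ <;>
    simp [AlgEquiv.mul_apply, hσ, hτ, hx0.symm]

theorem apply_eq_sqrtSign_smul (hx : x ^ 2 = algebraMap K L a) (hx0 : x ≠ -x) (τ : L ≃ₐ[K] L) :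
    τ x = (sqrtSign hx hx0 τ : ℤ) • x := by
  rcases τ.apply_eq_or_eq_neg_of_sq_eq_algebraMap hx with h | h <;> simp [sqrtSign, h, hx0.symm]

end AdjoinSqrt

theorem IntermediateField.mem_range_algebraMap_iff {F E : Type*} [Field F] [Field E]
    [Algebra F E] (K : IntermediateField F E) {x : E} :
    x ∈ Set.range (algebraMap K E) ↔ x ∈ K := by
  simp

theorem Int.cast_unit_eq_one_or {R : Type*} [Ring R] (u : ℤˣ) :
    ((u : ℤ) : R) = 1 ∨ ((u : ℤ) : R) = -1 := by
  rcases Int.units_eq_one_or u with rfl | rfl <;> simp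

theorem Int.exists_unit_cast_eq {R : Type*} [Ring R] {s : R} (hs : s = 1 ∨ s = -1) :
    ∃ u : ℤˣ, ((u : ℤ) : R) = s := by
  rcases hs with rfl | rfl
  exacts [⟨1, by simp⟩, ⟨-1, by simp⟩]

theorem Subgroup.closure_range_mulSingle_neg_one {ι : Type*} [Fintype ι] [DecidableEq ι] :
    closure (Set.range fun i : ι => Pi.mulSingle i (-1 : ℤˣ)) = ⊤ := by
  refine eq_top_iff.mpr fun f _ => ?_
  rw [← Finset.univ_prod_mulSingle f]
  refine Subgroup.prod_mem _ fun i _ => ?_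
  rcases Int.units_eq_one_or (f i) with h | h
  · simp [h]
  · exact h ▸ subset_closure ⟨i, rfl⟩

theorem sqrt_natCast_sq (K : Type*) [Field K] [Algebra K ℝ] (n : ℕ) :
    √(n : ℝ) ^ 2 = algebraMap K ℝ n := by
  simp

theorem Nat.Prime.coprime_of_notMem {q : ℕ} (hq : q.Prime) {S : Finset ℕ}
    (hS : ∀ p ∈ S, p.Prime) (hqS : q ∉ S) : ∀ p ∈ S, q.Coprime p := fun p hp =>
  (Nat.coprime_primes hq (hS p hp)).mpr (ne_of_mem_of_not_mem hp hqS).symm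

noncomputable def sqrtField (S : Finset ℕ) : IntermediateField ℚ ℝ :=
  adjoin ℚ ((fun n : ℕ => √(n : ℝ)) '' S)

namespace sqrtField

theorem empty_eq : sqrtField ∅ = ⊥ := by
  rw [sqrtField, Finset.coe_empty, Set.image_empty, adjoin_empty]

theorem insert_eq (q : ℕ) (S : Finset ℕ) :
    sqrtField (insert q S) = (adjoin (sqrtField S) {√(q : ℝ)}).restrictScalars ℚ := by
  refine Eq.trans ?_ (adjoin_adjoin_left ℚ _ _).symm
  rw [sqrtField, Finset.coe_insert, Set.image_insert_eq, Set.insert_eq, Set.union_comm]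

theorem sqrt_notMem {S : Finset ℕ} (hS : ∀ q ∈ S, q.Prime) {m : ℕ} (hm : Squarefree m)
    (hm1 : m ≠ 1) (hmS : ∀ q ∈ S, m.Coprime q) : √(m : ℝ) ∉ sqrtField S := by
  induction S using Finset.induction_on generalizing m with
  | empty =>
    rw [empty_eq, mem_bot]
    refine irrational_sqrt_natCast_iff.mpr fun ⟨r, hr⟩ => hm1 ?_
    rw [hr, Nat.isUnit_iff.mp (hm r (hr ▸ dvd_rfl))]
  | insert q S hqS ih =>
    simp only [Finset.mem_insert, forall_eq_or_imp] at hS hmS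
    have hqS' := hS.1.coprime_of_notMem hS.2 hqS
    rw [insert_eq, mem_restrictScalars]
    simp only [← mem_range_algebraMap_iff] at ih
    refine notMem_adjoin_sqrt (sqrt_natCast_sq _ q) (sqrt_natCast_sq _ m)
      (ih hS.2 hS.1.squarefree hS.1.ne_one hqS') (ih hS.2 hm hm1 hmS.2) ?_
    rw [← Real.sqrt_mul (Nat.cast_nonneg q), ← Nat.cast_mul]
    refine ih hS.2 (Nat.squarefree_mul_iff.mpr ⟨hmS.1.symm, hS.1.squarefree, hm⟩) ?_ ?_
    · exact fun h => hS.1.ne_one (Nat.eq_one_of_mul_eq_one_right h)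
    · exact fun p hp => Nat.Coprime.mul_left (hqS' p hp) (hmS.2 p hp)

theorem finrank_eq {S : Finset ℕ} (hS : ∀ q ∈ S, q.Prime) :
    Module.finrank ℚ (sqrtField S) = 2 ^ S.card := by
  induction S using Finset.induction_on with
  | empty =>
    rw [empty_eq, IntermediateField.finrank_bot, Finset.card_empty, pow_zero]
  | insert q S hqS ih =>
    simp only [Finset.mem_insert, forall_eq_or_imp] at hS
    have hq : √(q : ℝ) ∉ Set.range (algebraMap (sqrtField S) ℝ) := by
      rw [mem_range_algebraMap_iff]
      exact sqrt_notMem hS.2 hS.1.squarefree hS.1.ne_one (hS.1.coprime_of_notMem hS.2 hqS)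
    rw [insert_eq, Finset.card_insert_of_notMem hqS, pow_succ, ← ih hS.2,
      ← finrank_adjoin_sqrt (sqrt_natCast_sq _ q) hq]
    exact (Module.finrank_mul_finrank ℚ (sqrtField S) (sqrtField S)⟮√(q : ℝ)⟯).symm

instance normal (S : Finset ℕ) : Normal ℚ (sqrtField S) := by
  rw [sqrtField, Set.image_eq_range, ← Set.iUnion_singleton_eq_range, adjoin_iUnion]
  exact normal_iSup (h := fun n => normal_adjoin_sqrt (sqrt_natCast_sq ℚ n))

theorem card_algEquiv {S : Finset ℕ} (hS : ∀ q ∈ S, q.Prime) :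
    Nat.card (sqrtField S ≃ₐ[ℚ] sqrtField S) = 2 ^ S.card := by
  have : FiniteDimensional ℚ (sqrtField S) :=
    Module.finite_of_finrank_pos (by rw [finrank_eq hS]; positivity)
  have : IsGalois ℚ (sqrtField S) := ⟨⟩
  rw [IsGalois.card_aut_eq_finrank, finrank_eq hS]

end sqrtField

namespace sqrtAdjoin

variable {k : ℕ} {p : Fin k → ℕ}

theorem eq_sqrtField (k : ℕ) (p : Fin k → ℕ) :
    sqrtAdjoin k p = sqrtField (Finset.univ.image p) := by
  rw [sqrtAdjoin, sqrtField, Finset.coe_image, Finset.coe_univ, Set.image_univ, ← Set.range_comp]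
  rfl

theorem card_algEquiv (hp : ∀ i, (p i).Prime) (hinj : Function.Injective p) :
    Nat.card (sqrtAdjoin k p ≃ₐ[ℚ] sqrtAdjoin k p) = 2 ^ k := by
  rw [eq_sqrtField, sqrtField.card_algEquiv (by simpa using hp),
    Finset.card_image_of_injective _ hinj, Finset.card_univ, Fintype.card_fin]

variable (p) in
noncomputable def gen (i : Fin k) : sqrtAdjoin k p :=
  ⟨√(p i : ℝ), subset_adjoin _ _ ⟨i, rfl⟩⟩

theorem gen_sq (i : Fin k) : gen p i ^ 2 = algebraMap ℚ (sqrtAdjoin k p) (p i) :=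
  Subtype.ext (sqrt_natCast_sq ℚ (p i))

theorem gen_ne_neg {i : Fin k} (hp : p i ≠ 0) : gen p i ≠ -gen p i := fun h =>
  (neg_lt_self (Real.sqrt_pos.mpr (Nat.cast_pos.mpr (Nat.pos_of_ne_zero hp)))).ne'
    (congrArg Subtype.val h)

noncomputable def signs (hp : ∀ i, p i ≠ 0) :
    (sqrtAdjoin k p ≃ₐ[ℚ] sqrtAdjoin k p) →* (Fin k → ℤˣ) :=
  MonoidHom.pi fun i => sqrtSign (gen_sq i) (gen_ne_neg (hp i))

theorem apply_gen (hp : ∀ i, p i ≠ 0) (τ : sqrtAdjoin k p ≃ₐ[ℚ] sqrtAdjoin k p) (i : Fin k) :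
    τ (gen p i) = (signs hp τ i : ℤ) • gen p i :=
  apply_eq_sqrtSign_smul (gen_sq i) (gen_ne_neg (hp i)) τ

theorem signs_injective (hp : ∀ i, p i ≠ 0) : Function.Injective (signs hp) := by
  intro σ τ h
  refine AlgEquiv.coe_toAlgHom_injective (algHom_ext_of_eq_adjoin ℚ rfl ?_)
  rintro _ ⟨i, rfl⟩
  exact (apply_gen hp σ i).trans (h ▸ (apply_gen hp τ i).symm)

theorem signs_bijective (hp : ∀ i, (p i).Prime) (hinj : Function.Injective p) :
    Function.Bijective (signs fun i => (hp i).ne_zero) := by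
  refine (Nat.bijective_iff_injective_and_card _).mpr ⟨signs_injective _, ?_⟩
  simp [card_algEquiv hp hinj, Nat.card_eq_fintype_card]

theorem forall_coe_apply_eq_iff (hp : ∀ i, p i ≠ 0) (τ : sqrtAdjoin k p ≃ₐ[ℚ] sqrtAdjoin k p)
    (ε : Fin k → ℤˣ) :
    (∀ (i : Fin k) (x : sqrtAdjoin k p), (x : ℝ) = √(p i : ℝ) →
      (τ x : ℝ) = ((ε i : ℤ) : ℝ) * √(p i : ℝ)) ↔ signs hp τ = ε := by
  have hcoe : ∀ i, (τ (gen p i) : ℝ) = ((signs hp τ i : ℤ) : ℝ) * √(p i : ℝ) := fun i => by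
    rw [apply_gen hp]
    simp [gen, zsmul_eq_mul]
  have hsqrt : ∀ i, √(p i : ℝ) ≠ 0 := fun i => by simpa using hp i
  constructor
  · intro h
    funext i
    have := (hcoe i).symm.trans (h i (gen p i) rfl)
    exact Units.ext (Int.cast_injective (mul_right_cancel₀ (hsqrt i) this))
  · rintro rfl i x hx
    obtain rfl : x = gen p i := Subtype.ext hx
    exact hcoe i

end sqrtAdjoin

/-- The Galois group of `F = ℚ(√p₁, …, √p_k)` over `ℚ`: for every choice of signs
there is exactly one automorphism `τ` of `F` fixing `ℚ` with `τ(√pᵢ) = ±√pᵢ`,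
every automorphism is of this form, the group is abelian of order `2^k`, and it is
generated by the automorphisms `τᵢ` with `τᵢ(√p_j) = (−1)^{δ(i,j)} √p_j`. -/
theorem galoisGroup_of_sqrtAdjoin
    (k : ℕ) (p : Fin k → ℕ) (hp : ∀ i, Nat.Prime (p i))
    (hinj : Function.Injective p) :
    (∀ s : Fin k → ℝ, (∀ i, s i = 1 ∨ s i = -1) →
        ∃! τ : sqrtAdjoin k p ≃ₐ[ℚ] sqrtAdjoin k p,
          ∀ (i : Fin k) (x : sqrtAdjoin k p), (x : ℝ) = Real.sqrt (p i) →
            (τ x : ℝ) = s i * Real.sqrt (p i)) ∧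
    (∀ τ : sqrtAdjoin k p ≃ₐ[ℚ] sqrtAdjoin k p,
        ∃ s : Fin k → ℝ, (∀ i, s i = 1 ∨ s i = -1) ∧
          ∀ (i : Fin k) (x : sqrtAdjoin k p), (x : ℝ) = Real.sqrt (p i) →
            (τ x : ℝ) = s i * Real.sqrt (p i)) ∧
    (∀ τ σ : sqrtAdjoin k p ≃ₐ[ℚ] sqrtAdjoin k p, τ * σ = σ * τ) ∧
    Nat.card (sqrtAdjoin k p ≃ₐ[ℚ] sqrtAdjoin k p) = 2 ^ k ∧
    Subgroup.closure
        {τ : sqrtAdjoin k p ≃ₐ[ℚ] sqrtAdjoin k p |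
          ∃ i : Fin k, ∀ (j : Fin k) (x : sqrtAdjoin k p), (x : ℝ) = Real.sqrt (p j) →
            (τ x : ℝ) = (if i = j then (-1 : ℝ) else 1) * Real.sqrt (p j)} = ⊤ := by
  set χ := MulEquiv.ofBijective _ (sqrtAdjoin.signs_bijective hp hinj)
  have hχ := sqrtAdjoin.forall_coe_apply_eq_iff fun i => (hp i).ne_zero
  refine ⟨fun s hs => ?_, fun τ => ?_, fun τ σ => ?_, sqrtAdjoin.card_algEquiv hp hinj, ?_⟩
  · choose ε hε using fun i => Int.exists_unit_cast_eq (hs i)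
    obtain rfl : s = fun i => ((ε i : ℤ) : ℝ) := funext fun i => (hε i).symm
    exact ⟨χ.symm ε, (hχ _ ε).mpr (χ.apply_symm_apply ε),
      fun τ hτ => χ.eq_symm_apply.mpr ((hχ τ ε).mp hτ)⟩
  · exact ⟨_, fun i => Int.cast_unit_eq_one_or _, (hχ τ _).mpr rfl⟩
  · exact χ.injective (by rw [map_mul, map_mul, mul_comm])
  · refine eq_top_iff.mpr (le_trans ?_ (Subgroup.closure_mono (Set.range_subset_iff
      (f := fun i => χ.symm (Pi.mulSingle i (-1))).mpr fun i => ⟨i, fun j x hx => ?_⟩)))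
    · rw [Set.range_comp', ← MulEquiv.coe_toMonoidHom, ← MonoidHom.map_closure,
        Subgroup.closure_range_mulSingle_neg_one, Subgroup.map_top_of_surjective _ χ.symm.surjective]
    · rw [(hχ _ (Pi.mulSingle i (-1))).mpr (χ.apply_symm_apply _) j x hx]
      by_cases hij : i = j <;> simp [hij]
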